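/- Any convex piecewise-linear function J: ℝ^n → ℝ expressible as a finite maximum J(ℓ) = max_{k=1,…,N} (a_k^T ℓ + b_k) can be exactly represented by a feedforward neural network composed of affine maps and ReLU activations. Conversely, every function computed by a feedforward ReLU network with affine layers is continuous and piecewise linear. -/
import Mathlib


open Matrix Finset

/-- Functions ℝᵏ → ℝˡ computed by feedforward networks composed of affine maps
and componentwise ReLU activations. -/
inductive ReLUNet : (k l : ℕ) → ((Fin k → ℝ) → (Fin l → ℝ)) → Prop
  | affine {k l : ℕ} (W : Matrix (Fin l) (Fin k) ℝ) (v : Fin l → ℝ) :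
      ReLUNet k l (fun x => W *ᵥ x + v)
  | relu {k : ℕ} : ReLUNet k k (fun x i => max (x i) 0)
  | comp {k l o : ℕ} {f : (Fin k → ℝ) → (Fin l → ℝ)} {g : (Fin l → ℝ) → (Fin o → ℝ)} :
      ReLUNet k l f → ReLUNet l o g → ReLUNet k o (fun x => g (f x))

lemma ReLUNet.congr {k l f g} (h : ReLUNet k l f) (hfg : ∀ x, f x = g x) :
    ReLUNet k l g := (funext hfg : f = g) ▸ h

lemma ReLUNet.affine' {k l : ℕ} (f) (W : Matrix (Fin l) (Fin k) ℝ) (v : Fin l → ℝ)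
    (h : ∀ x, W *ᵥ x + v = f x) : ReLUNet k l f := (ReLUNet.affine W v).congr h

lemma dot_append {a b : ℕ} (u : Fin a → ℝ) (v : Fin b → ℝ) (x : Fin (a + b) → ℝ) :
    Fin.append u v ⬝ᵥ x =
      (u ⬝ᵥ fun i => x (Fin.castAdd b i)) + v ⬝ᵥ fun j => x (Fin.natAdd a j) := by
  simp [dotProduct, Fin.sum_univ_add]

lemma ReLUNet.carry (m : ℕ) {k l : ℕ} {f} (h : ReLUNet k l f) :
    ReLUNet (k + m) (l + m)
      (fun x => Fin.append (f fun i => x (Fin.castAdd m i)) fun j => x (Fin.natAdd k j)) := by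
  induction h with
  | @affine k l W v =>
    refine affine' _
      (fun i => Fin.addCases (fun i0 => Fin.append (W i0) 0)
        (fun i1 => Pi.single (Fin.natAdd k i1) 1) i) (Fin.append v 0) fun x => ?_
    funext i
    refine Fin.addCases (fun i0 => ?_) (fun i1 => ?_) i <;>
      simp [mulVec, dot_append, single_dotProduct]
  | @relu k =>
    have base := ((ReLUNet.affine
        (fun i : Fin (k + m + m) => Fin.addCases (fun i0 : Fin (k + m) => Pi.single i0 (1:ℝ))
          (fun j : Fin m => Pi.single (Fin.natAdd k j) (-1)) i) 0).comp
      ReLUNet.relu).comp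
      (ReLUNet.affine (fun i : Fin (k + m) => Fin.addCases
          (fun i0 : Fin k => Pi.single (Fin.castAdd m (Fin.castAdd m i0)) (1:ℝ))
          (fun j : Fin m => Pi.single (Fin.castAdd m (Fin.natAdd k j)) 1
            + Pi.single (Fin.natAdd (k + m) j) (-1)) i) 0)
    refine base.congr fun x => ?_
    funext i
    refine Fin.addCases (fun i0 => ?_) (fun i1 => ?_) i <;>
      simp [mulVec, single_dotProduct, add_dotProduct, dotProduct, Pi.single_apply,
        add_mul, ite_mul, Finset.sum_add_distrib, Finset.sum_ite_eq', neg_mul, one_mul,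
        zero_mul, ← sub_eq_add_neg, max_zero_sub_max_neg_zero_eq_self]
  | @comp k l o f g hf hg ihf ihg =>
    refine (ihf.comp ihg).congr fun x => ?_
    funext i
    refine Fin.addCases (fun i0 => ?_) (fun i1 => ?_) i <;> simp

lemma ReLUNet.swap (a b : ℕ) :
    ReLUNet (a + b) (b + a)
      (fun x => Fin.append (fun j => x (Fin.natAdd a j)) fun i => x (Fin.castAdd b i)) := by
  refine affine' _
    (fun i => Fin.addCases (fun j : Fin b => Pi.single (Fin.natAdd a j) (1:ℝ))
      (fun i0 : Fin a => Pi.single (Fin.castAdd b i0) 1) i) 0 fun x => ?_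
  funext i
  refine Fin.addCases (fun j => ?_) (fun i0 => ?_) i <;>
    simp only [Pi.add_apply, Matrix.mulVec, Fin.addCases_left, Fin.addCases_right,
      Fin.append_left, Fin.append_right, single_dotProduct, Pi.zero_apply, add_zero, one_mul]

lemma ReLUNet.dup (a : ℕ) : ReLUNet a (a + a) (fun x => Fin.append x x) := by
  refine affine' _
    (fun i => Fin.addCases (fun i0 : Fin a => Pi.single i0 (1:ℝ))
      (fun i0 : Fin a => Pi.single i0 1) i) 0 fun x => ?_
  funext i
  refine Fin.addCases (fun i0 => ?_) (fun i0 => ?_) i <;>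
    simp only [Pi.add_apply, Matrix.mulVec, Fin.addCases_left, Fin.addCases_right,
      Fin.append_left, Fin.append_right, single_dotProduct, Pi.zero_apply, add_zero, one_mul]

lemma ReLUNet.maxNet2 : ReLUNet 2 1 (fun x _ => max (x 0) (x 1)) := by
  have base := ((ReLUNet.affine (!![1,-1; 0,1; 0,-1] : Matrix (Fin 3) (Fin 2) ℝ) 0).comp
    ReLUNet.relu).comp (ReLUNet.affine (!![1,1,-1] : Matrix (Fin 1) (Fin 3) ℝ) 0)
  refine base.congr fun x => ?_
  funext i
  have h1 : max (x 0 + -x 1) 0 + x 1 = max (x 0) (x 1) := by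
    rw [← max_add_add_right]; simp
  simp [mulVec, dotProduct, Fin.sum_univ_succ]
  have h2 : ∀ y : ℝ, y ⊔ 0 + -(-y ⊔ 0) = y := fun y => by
    rw [← sub_eq_add_neg]; exact max_zero_sub_max_neg_zero_eq_self y
  rw [h2, h1]

lemma ReLUNet.parMax {n : ℕ} {F G : (Fin n → ℝ) → (Fin 1 → ℝ)}
    (hF : ReLUNet n 1 F) (hG : ReLUNet n 1 G) :
    ReLUNet n 1 (fun x _ => max (F x 0) (G x 0)) := by
  have c := ((((ReLUNet.dup n).comp (hF.carry n)).comp (ReLUNet.swap 1 n)).comp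
      (hG.carry 1)).comp ReLUNet.maxNet2
  refine c.congr fun x => ?_
  funext i
  simp only [Fin.append_left, Fin.append_right]
  rw [show ((0 : Fin (1+1))) = Fin.castAdd 1 (0 : Fin 1) from rfl,
    show ((1 : Fin (1+1))) = Fin.natAdd 1 (0 : Fin 1) from rfl,
    Fin.append_left, Fin.append_right, max_comm]

lemma sup'_fin_succ {N : ℕ} (f : Fin (N + 2) → ℝ) :
    univ.sup' univ_nonempty f = max (univ.sup' univ_nonempty (f ∘ Fin.succ)) (f 0) := by
  apply le_antisymm
  · refine Finset.sup'_le _ _ fun i _ => ?_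
    induction i using Fin.cases with
    | zero => exact le_max_right _ _
    | succ j => exact le_max_of_le_left (Finset.le_sup' (f ∘ Fin.succ) (mem_univ j))
  · exact max_le (Finset.sup'_le _ _ fun j _ => Finset.le_sup' f (mem_univ j.succ))
      (Finset.le_sup' f (mem_univ 0))

lemma ReLUNet.forward (n : ℕ) :
    ∀ (N : ℕ) (a : Fin (N + 1) → (Fin n → ℝ)) (b : Fin (N + 1) → ℝ),
    ∃ F : (Fin n → ℝ) → (Fin 1 → ℝ), ReLUNet n 1 F ∧
      ∀ ℓ, F ℓ 0 = univ.sup' univ_nonempty fun k => a k ⬝ᵥ ℓ + b k := by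
  intro N
  induction N with
  | zero =>
    intro a b
    refine ⟨fun x _ => a 0 ⬝ᵥ x + b 0, ?_, fun ℓ => ?_⟩
    · exact ReLUNet.affine' _ (fun _ => a 0) (fun _ => b 0) fun x => rfl
    · simp only [show (fun k : Fin 1 => a k ⬝ᵥ ℓ + b k) = fun _ => a 0 ⬝ᵥ ℓ + b 0 from
        funext fun k => by rw [Subsingleton.elim k 0], Finset.sup'_const]
  | succ N ih =>
    intro a b
    obtain ⟨F, hF, hFs⟩ := ih (fun k => a k.succ) (fun k => b k.succ)
    have hG : ReLUNet n 1 (fun x _ => a 0 ⬝ᵥ x + b 0) :=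
      ReLUNet.affine' _ (fun _ => a 0) (fun _ => b 0) fun x => rfl
    refine ⟨_, hF.parMax hG, fun ℓ => ?_⟩
    rw [sup'_fin_succ (fun k => a k ⬝ᵥ ℓ + b k), hFs ℓ]
    rfl

lemma ReLUNet.continuous {k l f} (h : ReLUNet k l f) : Continuous f := by
  induction h with
  | affine W v =>
    apply continuous_pi; intro i
    simp only [Pi.add_apply, mulVec, dotProduct]
    exact (continuous_finset_sum _ fun j _ =>
      continuous_const.mul (continuous_apply j)).add continuous_const
  | relu => exact continuous_pi fun i => (continuous_apply i).max continuous_const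
  | comp hf hg ihf ihg => exact ihg.comp ihf

lemma ReLUNet.piecewise {k l f} (h : ReLUNet k l f) :
    ∃ s : Finset ((Fin k → ℝ) × ℝ), ∀ x (i : Fin l), ∃ p ∈ s, f x i = p.1 ⬝ᵥ x + p.2 := by
  induction h with
  | affine W v =>
    exact ⟨Finset.univ.image fun i => (W i, v i),
      fun x i => ⟨(W i, v i), mem_image_of_mem _ (mem_univ i), rfl⟩⟩
  | relu =>
    refine ⟨insert (0, 0) (Finset.univ.image fun i => (Pi.single i 1, 0)), fun x i => ?_⟩
    rcases le_total (x i) 0 with hx | hx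
    · exact ⟨(0, 0), mem_insert_self _ _, by simp [max_eq_right hx]⟩
    · exact ⟨(Pi.single i 1, 0), mem_insert_of_mem (mem_image_of_mem _ (mem_univ i)),
        by simp [max_eq_left hx, single_dotProduct]⟩
  | @comp k l o f g hf hg ihf ihg =>
    obtain ⟨sf, hsf⟩ := ihf
    obtain ⟨sg, hsg⟩ := ihg
    refine ⟨(sg ×ˢ Fintype.piFinset fun _ => sf).image fun pc =>
      (∑ j, pc.1.1 j • (pc.2 j).1, ∑ j, pc.1.1 j * (pc.2 j).2 + pc.1.2), fun x i => ?_⟩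
    obtain ⟨p, hp, hpx⟩ := hsg (f x) i
    choose q hq hqx using fun j => hsf x j
    have hm : (p, q) ∈ sg ×ˢ Fintype.piFinset fun _ => sf :=
      mem_product.2 ⟨hp, Fintype.mem_piFinset.2 hq⟩
    refine ⟨_, mem_image_of_mem _ hm, ?_⟩
    simp only [hpx, dotProduct, Finset.sum_apply, Pi.smul_apply, smul_eq_mul,
      Finset.sum_mul, hqx, mul_add, Finset.mul_sum, Finset.sum_add_distrib, mul_assoc,
      ← add_assoc]
    rw [Finset.sum_comm]

/-- Every finite maximum of affine functions (a convex
piecewise-linear function) is exactly computed by a feedforward ReLU network,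
and conversely every function computed by a feedforward ReLU network is
continuous and piecewise linear. -/
theorem stmt_12 {n : ℕ} :
    (∀ (N : ℕ) (a : Fin (N + 1) → (Fin n → ℝ)) (b : Fin (N + 1) → ℝ),
      ∃ F : (Fin n → ℝ) → (Fin 1 → ℝ), ReLUNet n 1 F ∧
        ∀ ℓ : Fin n → ℝ,
          F ℓ 0 = Finset.univ.sup' Finset.univ_nonempty (fun k => a k ⬝ᵥ ℓ + b k)) ∧
    (∀ F : (Fin n → ℝ) → (Fin 1 → ℝ), ReLUNet n 1 F →
      Continuous (fun ℓ => F ℓ 0) ∧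
      ∃ (M : ℕ) (a : Fin M → (Fin n → ℝ)) (β : Fin M → ℝ),
        ∀ ℓ : Fin n → ℝ, ∃ k, F ℓ 0 = a k ⬝ᵥ ℓ + β k) := by
  refine ⟨ReLUNet.forward n, fun F hF => ?_⟩
  refine ⟨(continuous_apply (0 : Fin 1)).comp hF.continuous, ?_⟩
  obtain ⟨s, hs⟩ := hF.piecewise
  let e := Fintype.equivFinOfCardEq (Fintype.card_coe s)
  refine ⟨s.card, fun k => (e.symm k).1.1, fun k => (e.symm k).1.2, fun ℓ => ?_⟩
  obtain ⟨p, hp, hpx⟩ := hs ℓ 0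
  exact ⟨e ⟨p, hp⟩, by simp only [hpx, Equiv.symm_apply_apply]⟩
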